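/- Let q be a real number with q > 1 and m ≥ 1 an integer. For 1 ≤ k ≤ m+1 define c1_k = q^{-2k^2+3k-1} / (q^{-2};q^{-2})_{k-1} · ( (q^{-2k};q^{-2})_{m-k+1} / (q^{-2};q^{-2})_{m-k+1} ) · q^{-1-m+k}. Then Σ_{k=1}^{m+1} c1_k = 1 / ( q^m (q^{-2}; q^{-2})_m ). -/
import Mathlib

/-- The q-Pochhammer symbol `(a; Q)_n = ∏_{j=0}^{n-1} (1 - a Q^j)` over the reals. -/
noncomputable def qPoch (a Q : ℝ) (n : ℕ) : ℝ := ∏ j ∈ Finset.range n, (1 - a * Q ^ j)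

lemma qPoch_pos (Q : ℝ) (hQ0 : 0 < Q) (hQ1 : Q < 1) (n : ℕ) : 0 < qPoch Q Q n := by
  unfold qPoch
  apply Finset.prod_pos
  intro j _
  have h1 : Q ^ j ≤ 1 := pow_le_one₀ hQ0.le hQ1.le
  nlinarith

lemma qPoch_succ (Q : ℝ) (n : ℕ) : qPoch Q Q (n + 1) = qPoch Q Q n * (1 - Q ^ (n + 1)) := by
  unfold qPoch
  rw [Finset.prod_range_succ, pow_succ']

lemma qPoch_add (Q : ℝ) (j n : ℕ) :
    qPoch Q Q (j + n) = qPoch Q Q j * qPoch (Q ^ (j + 1)) Q n := by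
  unfold qPoch
  rw [Finset.prod_range_add]
  congr 1
  apply Finset.prod_congr rfl
  intro i _
  rw [pow_add, pow_succ]
  ring

lemma pt_aux (Q x y z a b : ℝ) (ha : a ≠ 0) (hb : b ≠ 0) (h5 : 1 - y * Q ≠ 0)
    (h6 : 1 - x * Q ≠ 0) :
    (1 - x * y * Q) ^ 2 * (z / (a ^ 2 * (b * (1 - y * Q))))
      = z / (a ^ 2 * b) + (y * Q * (1 - x) ^ 2 * (z / (a ^ 2 * (b * (1 - y * Q))))
          - y * (1 - x * Q) ^ 2 * (z * x * x * Q / ((a * (1 - x * Q)) ^ 2 * b))) := by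
  field_simp
  ring

lemma key_sum (Q : ℝ) (hQ0 : 0 < Q) (hQ1 : Q < 1) (m : ℕ) :
    ∑ j ∈ Finset.range (m + 1), Q ^ (j ^ 2) / ((qPoch Q Q j) ^ 2 * qPoch Q Q (m - j))
      = 1 / (qPoch Q Q m) ^ 2 := by
  induction m with
  | zero => simp [qPoch]
  | succ m ih =>
    have hpos := qPoch_pos Q hQ0 hQ1
    have hne : ∀ n, qPoch Q Q n ≠ 0 := fun n => (hpos n).ne'
    have hQp : ∀ n : ℕ, Q ^ (n + 1) < 1 := fun n => pow_lt_one₀ hQ0.le hQ1 (by omega)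
    have hMne : (1 : ℝ) - Q ^ (m + 1) ≠ 0 := by have := hQp m; intro h; nlinarith
    set H : ℕ → ℝ := fun j =>
      Q ^ (m + 1 - j) * (1 - Q ^ j) ^ 2 * (Q ^ (j ^ 2) / ((qPoch Q Q j) ^ 2 * qPoch Q Q (m + 1 - j)))
      with hH
    have hpoint : ∀ j ∈ Finset.range (m + 1),
        (1 - Q ^ (m + 1)) ^ 2 * (Q ^ (j ^ 2) / ((qPoch Q Q j) ^ 2 * qPoch Q Q (m + 1 - j)))
          = Q ^ (j ^ 2) / ((qPoch Q Q j) ^ 2 * qPoch Q Q (m - j)) + (H j - H (j + 1)) := by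
      intro j hj
      have hj' : j ≤ m := Nat.lt_succ_iff.mp (Finset.mem_range.mp hj)
      obtain ⟨t, ht⟩ : ∃ t, m = j + t := ⟨m - j, by omega⟩
      subst ht
      have h1 : j + t + 1 - j = t + 1 := by omega
      have h2 : j + t - j = t := by omega
      have h3 : j + t + 1 - (j + 1) = t := by omega
      simp only [hH, h1, h2, h3]
      rw [qPoch_succ Q t, qPoch_succ Q j]
      have e1 : Q ^ (j + t + 1) = Q ^ j * Q ^ t * Q := by rw [pow_succ, pow_add]
      have e2 : Q ^ (t + 1) = Q ^ t * Q := by rw [pow_succ]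
      have e3 : Q ^ (j + 1) = Q ^ j * Q := by rw [pow_succ]
      have e4 : Q ^ ((j + 1) ^ 2) = Q ^ (j ^ 2) * Q ^ j * Q ^ j * Q := by
        rw [show (j + 1) ^ 2 = j ^ 2 + j + j + 1 by ring, pow_succ, pow_add, pow_add]
      rw [e1, e2, e3, e4]
      have h5 : (1 : ℝ) - Q ^ t * Q ≠ 0 := by rw [← pow_succ]; have := hQp t; intro h; nlinarith
      have h6 : (1 : ℝ) - Q ^ j * Q ≠ 0 := by rw [← pow_succ]; have := hQp j; intro h; nlinarith
      linear_combination pt_aux Q (Q ^ j) (Q ^ t) (Q ^ (j ^ 2)) (qPoch Q Q j) (qPoch Q Q t)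
        (hne j) (hne t) h5 h6
    have hsum : (1 - Q ^ (m + 1)) ^ 2 *
        ∑ j ∈ Finset.range (m + 1 + 1),
          Q ^ (j ^ 2) / ((qPoch Q Q j) ^ 2 * qPoch Q Q (m + 1 - j))
        = 1 / (qPoch Q Q m) ^ 2 := by
      rw [Finset.mul_sum, Finset.sum_range_succ, Finset.sum_congr rfl hpoint,
        Finset.sum_add_distrib, ih, Finset.sum_range_sub' H (m + 1)]
      have hH0 : H 0 = 0 := by simp [hH]
      have hHM : H (m + 1) = (1 - Q ^ (m + 1)) ^ 2 *
          (Q ^ ((m + 1) ^ 2) / ((qPoch Q Q (m + 1)) ^ 2 * qPoch Q Q (m + 1 - (m + 1)))) := by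
        simp only [hH, Nat.sub_self, pow_zero, one_mul]
      rw [hH0, hHM]
      ring
    rw [qPoch_succ Q m]
    have hne2 : (qPoch Q Q m * (1 - Q ^ (m + 1))) ^ 2 ≠ 0 := by
      apply pow_ne_zero
      exact mul_ne_zero (hne m) hMne
    rw [eq_div_iff hne2]
    have h2 : (∑ j ∈ Finset.range (m + 1 + 1),
          Q ^ (j ^ 2) / ((qPoch Q Q j) ^ 2 * qPoch Q Q (m + 1 - j)))
            * (qPoch Q Q m * (1 - Q ^ (m + 1))) ^ 2
        = 1 / (qPoch Q Q m) ^ 2 * (qPoch Q Q m) ^ 2 := by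
      linear_combination (qPoch Q Q m) ^ 2 * hsum
    rw [h2, one_div, inv_mul_cancel₀ (pow_ne_zero 2 (hne m))]

theorem anzanello_c1_sum (q : ℝ) (hq : 1 < q) (m : ℕ) (hm : 1 ≤ m) :
    ∑ k ∈ Finset.Icc 1 (m + 1),
      q ^ (-(2 * (k : ℤ) ^ 2) + 3 * k - 1) / qPoch (q ^ (-2 : ℤ)) (q ^ (-2 : ℤ)) (k - 1)
        * (qPoch (q ^ (-(2 * (k : ℤ)))) (q ^ (-2 : ℤ)) (m + 1 - k)
            / qPoch (q ^ (-2 : ℤ)) (q ^ (-2 : ℤ)) (m + 1 - k))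
        * q ^ (-1 - (m : ℤ) + k)
    = 1 / (q ^ m * qPoch (q ^ (-2 : ℤ)) (q ^ (-2 : ℤ)) m) := by
  have hq0 : (0 : ℝ) < q := lt_trans zero_lt_one hq
  have hqne : q ≠ 0 := hq0.ne'
  set Q : ℝ := q ^ (-2 : ℤ) with hQdef
  have hQeq : Q = (q ^ 2)⁻¹ := by
    rw [hQdef, zpow_neg, ← zpow_natCast q 2]
    norm_num
  have hQ0 : 0 < Q := by rw [hQeq]; positivity
  have hQ1 : Q < 1 := by
    rw [hQeq]
    have h2 : (1 : ℝ) < q ^ 2 := by nlinarith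
    exact inv_lt_one_of_one_lt₀ h2
  have hpos := qPoch_pos Q hQ0 hQ1
  have hne : ∀ n, qPoch Q Q n ≠ 0 := fun n => (hpos n).ne'
  rw [← Finset.Ico_add_one_right_eq_Icc, Finset.sum_Ico_eq_sum_range]
  have hrange : m + 1 + 1 - 1 = m + 1 := by omega
  rw [hrange]
  have hterm : ∀ j ∈ Finset.range (m + 1),
      q ^ (-(2 * ((1 + j : ℕ) : ℤ) ^ 2) + 3 * ((1 + j : ℕ) : ℤ) - 1)
          / qPoch Q Q (1 + j - 1)
        * (qPoch (q ^ (-(2 * ((1 + j : ℕ) : ℤ)))) Q (m + 1 - (1 + j))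
            / qPoch Q Q (m + 1 - (1 + j)))
        * q ^ (-1 - (m : ℤ) + ((1 + j : ℕ) : ℤ))
      = q ^ (-(m : ℤ)) * (qPoch Q Q m *
          (Q ^ (j ^ 2) / ((qPoch Q Q j) ^ 2 * qPoch Q Q (m - j)))) := by
    intro j hj
    have hj' : j ≤ m := Nat.lt_succ_iff.mp (Finset.mem_range.mp hj)
    have hk1 : 1 + j - 1 = j := by omega
    have hk2 : m + 1 - (1 + j) = m - j := by omega
    rw [hk1, hk2]
    have hbase : q ^ (-(2 * ((1 + j : ℕ) : ℤ))) = Q ^ (j + 1) := by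
      rw [hQdef, ← zpow_natCast (q ^ (-2 : ℤ)) (j + 1), ← zpow_mul]
      congr 1
      push_cast
      ring
    rw [hbase]
    have hpoch : qPoch (Q ^ (j + 1)) Q (m - j) = qPoch Q Q m / qPoch Q Q j := by
      have h := qPoch_add Q j (m - j)
      rw [show j + (m - j) = m by omega] at h
      rw [eq_div_iff (hne j)]
      linear_combination -h
    rw [hpoch]
    have hE : q ^ (-(2 * ((1 + j : ℕ) : ℤ) ^ 2) + 3 * ((1 + j : ℕ) : ℤ) - 1)
        * q ^ (-1 - (m : ℤ) + ((1 + j : ℕ) : ℤ)) = Q ^ (j ^ 2) * q ^ (-(m : ℤ)) := by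
      rw [← zpow_add₀ hqne, hQdef, ← zpow_natCast (q ^ (-2 : ℤ)) (j ^ 2), ← zpow_mul,
        ← zpow_add₀ hqne]
      congr 1
      push_cast
      ring
    linear_combination (qPoch Q Q m * ((qPoch Q Q j) ^ 2)⁻¹ * (qPoch Q Q (m - j))⁻¹) * hE
  rw [Finset.sum_congr rfl hterm, ← Finset.mul_sum, ← Finset.mul_sum, key_sum Q hQ0 hQ1 m]
  rw [zpow_neg, ← zpow_natCast q m]
  have hd1 : (q : ℝ) ^ (m : ℤ) ≠ 0 := zpow_ne_zero _ hqne
  rw [pow_two]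
  field_simp
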